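/- Two gradual types G1 and G2 are consistent if and only if there exist static types T1 ∈ γ(G1) and T2 ∈ γ(G2) with T1 = T2; equivalently, iff γ(G1) ∩ γ(G2) is nonempty. -/
import Mathlib

inductive GType : Type
  | int
  | bool
  | unk
  | arrow (a b : GType)
deriving DecidableEq

/-- Consistency on gradual types. -/
inductive Consist : GType → GType → Prop
  | unkL (G : GType) : Consist GType.unk G
  | unkR (G : GType) : Consist G GType.unk
  | int : Consist GType.int GType.int
  | bool : Consist GType.bool GType.bool
  | arrow {a a' b b' : GType} : Consist a a' → Consist b b' →
      Consist (GType.arrow a b) (GType.arrow a' b')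

inductive SType : Type
  | int
  | bool
  | arrow (a b : SType)
deriving DecidableEq

/-- Concretization of gradual types to sets of static types. -/
def gamma : GType → Set SType
  | GType.int => {SType.int}
  | GType.bool => {SType.bool}
  | GType.unk => Set.univ
  | GType.arrow a b => {T | ∃ T1 ∈ gamma a, ∃ T2 ∈ gamma b, T = SType.arrow T1 T2}

lemma gamma_nonempty : ∀ G : GType, ∃ T, T ∈ gamma G := by
  intro G
  induction G with
  | int => exact ⟨SType.int, rfl⟩
  | bool => exact ⟨SType.bool, rfl⟩
  | unk => exact ⟨SType.int, trivial⟩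
  | arrow a b iha ihb =>
    obtain ⟨T1, h1⟩ := iha
    obtain ⟨T2, h2⟩ := ihb
    exact ⟨SType.arrow T1 T2, T1, h1, T2, h2, rfl⟩

lemma mem_gamma_consist : ∀ (T : SType) (G1 G2 : GType),
    T ∈ gamma G1 → T ∈ gamma G2 → Consist G1 G2 := by
  intro T
  induction T with
  | int =>
    intro G1 G2 h1 h2
    cases G1 with
    | unk => exact Consist.unkL _
    | int =>
      cases G2 with
      | unk => exact Consist.unkR _
      | int => exact Consist.int
      | bool => exact absurd h2 (by simp [gamma])
      | arrow a b => obtain ⟨_, _, _, _, h⟩ := h2; cases h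
    | bool => exact absurd h1 (by simp [gamma])
    | arrow a b => obtain ⟨_, _, _, _, h⟩ := h1; cases h
  | bool =>
    intro G1 G2 h1 h2
    cases G1 with
    | unk => exact Consist.unkL _
    | bool =>
      cases G2 with
      | unk => exact Consist.unkR _
      | bool => exact Consist.bool
      | int => exact absurd h2 (by simp [gamma])
      | arrow a b => obtain ⟨_, _, _, _, h⟩ := h2; cases h
    | int => exact absurd h1 (by simp [gamma])
    | arrow a b => obtain ⟨_, _, _, _, h⟩ := h1; cases h
  | arrow Ta Tb iha ihb =>
    intro G1 G2 h1 h2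
    cases G1 with
    | unk => exact Consist.unkL _
    | int => exact absurd h1 (by simp [gamma])
    | bool => exact absurd h1 (by simp [gamma])
    | arrow a b =>
      cases G2 with
      | unk => exact Consist.unkR _
      | int => exact absurd h2 (by simp [gamma])
      | bool => exact absurd h2 (by simp [gamma])
      | arrow a' b' =>
        obtain ⟨U1, hU1, U2, hU2, he⟩ := h1
        obtain ⟨V1, hV1, V2, hV2, he'⟩ := h2
        cases he; cases he'
        exact Consist.arrow (iha _ _ hU1 hV1) (ihb _ _ hU2 hV2)

lemma consist_common : ∀ {G1 G2 : GType}, Consist G1 G2 →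
    ∃ T, T ∈ gamma G1 ∧ T ∈ gamma G2 := by
  intro G1 G2 h
  induction h with
  | unkL G => obtain ⟨T, hT⟩ := gamma_nonempty G; exact ⟨T, trivial, hT⟩
  | unkR G => obtain ⟨T, hT⟩ := gamma_nonempty G; exact ⟨T, hT, trivial⟩
  | int => exact ⟨SType.int, rfl, rfl⟩
  | bool => exact ⟨SType.bool, rfl, rfl⟩
  | arrow _ _ iha ihb =>
    obtain ⟨T1, h1, h1'⟩ := iha
    obtain ⟨T2, h2, h2'⟩ := ihb
    exact ⟨SType.arrow T1 T2, ⟨T1, h1, T2, h2, rfl⟩, ⟨T1, h1', T2, h2', rfl⟩⟩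

/-- Consistency coincides with existence of a common static type in the
concretizations, equivalently nonemptiness of the intersection. -/
theorem consist_iff_gamma_inter :
    ∀ G1 G2 : GType,
      (Consist G1 G2 ↔ ∃ T1 ∈ gamma G1, ∃ T2 ∈ gamma G2, T1 = T2) ∧
      (Consist G1 G2 ↔ (gamma G1 ∩ gamma G2).Nonempty) := by
  intro G1 G2
  constructor
  · constructor
    · intro h
      obtain ⟨T, h1, h2⟩ := consist_common h
      exact ⟨T, h1, T, h2, rfl⟩
    · rintro ⟨T1, h1, T2, h2, rfl⟩
      exact mem_gamma_consist _ _ _ h1 h2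
  · constructor
    · intro h
      obtain ⟨T, h1, h2⟩ := consist_common h
      exact ⟨T, h1, h2⟩
    · rintro ⟨T, h1, h2⟩
      exact mem_gamma_consist _ _ _ h1 h2
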